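/- arXiv:1901.04887 — 2 statements merged into one kernel-verified Lean document; each statement's English description precedes it below -/
import Mathlib

section
/- Let X be a topological space with wt(X) = κ, witnessed by a cover 𝒞 of X (so |𝒞| ≤ 2^κ, every C ∈ 𝒞 has subspace tightness ≤ κ, and X = cl_{2^κ}(C) for every C ∈ 𝒞). Let S be a function assigning to each x ∈ X a 𝒞-saturated set S(x) ⊆ X with x ∈ S(x) and |S(x)| ≤ 2^κ, and for A ⊆ X set S(A) = ⋃{S(x) : x ∈ A}. If X is κ⁺-compact (every subset of X of cardinality κ⁺ has a complete accumulation point), then there is no S-free sequence in X of length κ⁺, i.e., no family {x_α : α < κ⁺} ⊆ X such that closure(S({x_β : β < α})) ∩ closure({x_β : α ≤ β < κ⁺}) = ∅ for all α < κ⁺. -/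
/-!
Suppose `x` is an `S`-free sequence of length `κ⁺`. Since `x_β ∈ S(x_β)`, freeness makes `x`
injective, so its range has a complete accumulation point `p`, and `p` lies in some `C ∈ 𝒞`.
As `p` is in the closure of the range and every `S(x_α)` is `𝒞`-saturated, `p` is in the
closure of `S(range x) ∩ C`; the tightness of `C` yields `B` of size `≤ κ` with `p ∈ cl B`.
By regularity of `κ⁺`, `B ⊆ S({x_β : β < α})` for some `α`, while `p`, being a complete
accumulation point, is also in the closure of the tail `{x_β : β ≥ α}`, contradicting freeness.
-/
open Cardinal Set Topology
universe u
noncomputable section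

/-- The tightness of a space: the least infinite cardinal `τ` such that whenever
`y ∈ closure A` there is `B ⊆ A` with `#B ≤ τ` and `y ∈ closure B`. -/
def tightness (Y : Type u) [TopologicalSpace Y] : Cardinal.{u} :=
  sInf {τ : Cardinal.{u} | ℵ₀ ≤ τ ∧ ∀ (A : Set Y) (y : Y), y ∈ closure A →
    ∃ B ⊆ A, #B ≤ τ ∧ y ∈ closure B}

/-- The `μ`-closure of a set `A`: the union of the closures of all subsets of `A`
of cardinality at most `μ`. -/
def kClosure {X : Type u} [TopologicalSpace X] (μ : Cardinal.{u}) (A : Set X) : Set X :=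
  ⋃ B ∈ {B : Set X | B ⊆ A ∧ #B ≤ μ}, closure B

/-- `𝒞` witnesses that the weak tightness of `X` is at most `κ`. -/
def IsWeakTightnessWitness (X : Type u) [TopologicalSpace X] (κ : Cardinal.{u})
    (𝒞 : Set (Set X)) : Prop :=
  ⋃₀ 𝒞 = Set.univ ∧ #𝒞 ≤ 2 ^ κ ∧ ∀ C ∈ 𝒞, tightness C ≤ κ ∧ kClosure (2 ^ κ) C = Set.univ

/-- The weak tightness of `X`: the least infinite cardinal `κ` for which there is a
cover `𝒞` of `X` with `#𝒞 ≤ 2^κ` such that each `C ∈ 𝒞` has tightness at most `κ`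
and `X = cl_{2^κ} C`. -/
def weakTightness (X : Type u) [TopologicalSpace X] : Cardinal.{u} :=
  sInf {κ : Cardinal.{u} | ℵ₀ ≤ κ ∧ ∃ 𝒞 : Set (Set X), IsWeakTightnessWitness X κ 𝒞}

/-- The π-character of a point `x`: the least cardinality of a family of nonempty
open sets such that every neighborhood of `x` contains a member of the family. -/
def piCharacterAt {X : Type u} [TopologicalSpace X] (x : X) : Cardinal.{u} :=
  sInf {c : Cardinal.{u} | ∃ 𝒰 : Set (Set X), #𝒰 = c ∧
    (∀ U ∈ 𝒰, IsOpen U ∧ U.Nonempty) ∧ ∀ N ∈ nhds x, ∃ U ∈ 𝒰, U ⊆ N}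

/-- The π-character of a space: the supremum of the π-characters at its points
(at least `ℵ₀`). -/
def piCharacter (X : Type u) [TopologicalSpace X] : Cardinal.{u} :=
  max ℵ₀ (⨆ x : X, piCharacterAt x)

/-- The Lindelöf degree: the least infinite cardinal `κ` such that every open cover
has a subcover of cardinality at most `κ`. -/
def lindelofDegree (X : Type u) [TopologicalSpace X] : Cardinal.{u} :=
  sInf {κ : Cardinal.{u} | ℵ₀ ≤ κ ∧ ∀ 𝒰 : Set (Set X), (∀ U ∈ 𝒰, IsOpen U) →
    ⋃₀ 𝒰 = Set.univ → ∃ 𝒱 ⊆ 𝒰, #𝒱 ≤ κ ∧ ⋃₀ 𝒱 = Set.univ}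

/-- The density of `X`: the least infinite cardinality of a dense subset. -/
def density (X : Type u) [TopologicalSpace X] : Cardinal.{u} :=
  sInf {c : Cardinal.{u} | ℵ₀ ≤ c ∧ ∃ D : Set X, Dense D ∧ #D ≤ c}

/-- The pseudocharacter of a subset `F` of `X`: the least infinite cardinality
of a family of open sets whose intersection is `F`. -/
def setPseudoCharacter {X : Type u} [TopologicalSpace X] (F : Set X) : Cardinal.{u} :=
  sInf {κ : Cardinal.{u} | ℵ₀ ≤ κ ∧ ∃ 𝒰 : Set (Set X), #𝒰 ≤ κ ∧
    (∀ U ∈ 𝒰, IsOpen U) ∧ ⋂₀ 𝒰 = F}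

/-- The pseudocharacter of a space: the least infinite `κ` such that every singleton
is the intersection of at most `κ` open sets. -/
def pseudoCharacter (X : Type u) [TopologicalSpace X] : Cardinal.{u} :=
  sInf {κ : Cardinal.{u} | ℵ₀ ≤ κ ∧ ∀ x : X, ∃ 𝒰 : Set (Set X), #𝒰 ≤ κ ∧
    (∀ U ∈ 𝒰, IsOpen U) ∧ ⋂₀ 𝒰 = {x}}

/-- The character of a (closed) set `G` in `X`: the least infinite cardinality of a
family `𝒰` of open sets containing `G` such that every open set containing `G`
contains a member of `𝒰`. -/
def setCharacter {X : Type u} [TopologicalSpace X] (G : Set X) : Cardinal.{u} :=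
  sInf {κ : Cardinal.{u} | ℵ₀ ≤ κ ∧ ∃ 𝒰 : Set (Set X), #𝒰 ≤ κ ∧
    (∀ U ∈ 𝒰, IsOpen U ∧ G ⊆ U) ∧ ∀ V : Set X, IsOpen V → G ⊆ V → ∃ U ∈ 𝒰, U ⊆ V}

/-- A cardinal `λ` is a caliber of `X` if every `λ`-indexed family of nonempty open
sets has a subfamily of cardinality `λ` with nonempty intersection. -/
def IsCaliber (X : Type u) [TopologicalSpace X] (lam : Cardinal.{u}) : Prop :=
  ∀ (ι : Type u) (U : ι → Set X), #ι = lam → (∀ i, IsOpen (U i) ∧ (U i).Nonempty) →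
    ∃ J : Set ι, #J = lam ∧ (⋂ i ∈ J, U i).Nonempty

/-- A space is quasiregular if every nonempty open set contains the closure of a
nonempty open set. -/
def Quasiregular (X : Type u) [TopologicalSpace X] : Prop :=
  ∀ U : Set X, IsOpen U → U.Nonempty → ∃ V : Set X, IsOpen V ∧ V.Nonempty ∧ closure V ⊆ U

/-- The θ-closure of a set `A`. -/
def thetaClosure {X : Type u} [TopologicalSpace X] (A : Set X) : Set X :=
  {x : X | ∀ U : Set X, IsOpen U → x ∈ U → (closure U ∩ A).Nonempty}

/-- The θ-density of `X`: the least infinite cardinality of a θ-dense subset. -/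
def thetaDensity (X : Type u) [TopologicalSpace X] : Cardinal.{u} :=
  sInf {c : Cardinal.{u} | ℵ₀ ≤ c ∧ ∃ D : Set X, thetaClosure D = Set.univ ∧ #D ≤ c}

/-- The linear Lindelöf degree: the least infinite cardinal `κ` such that every open
cover totally ordered by inclusion has a subcover of cardinality at most `κ`. -/
def linearLindelofDegree (X : Type u) [TopologicalSpace X] : Cardinal.{u} :=
  sInf {κ : Cardinal.{u} | ℵ₀ ≤ κ ∧ ∀ 𝒰 : Set (Set X), (∀ U ∈ 𝒰, IsOpen U) →
    IsChain (· ⊆ ·) 𝒰 → ⋃₀ 𝒰 = Set.univ → ∃ 𝒱 ⊆ 𝒰, #𝒱 ≤ κ ∧ ⋃₀ 𝒱 = Set.univ}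

/-- The almost Lindelöf degree with respect to closed sets. -/
def almostLindelofDegreeClosed (X : Type u) [TopologicalSpace X] : Cardinal.{u} :=
  sInf {κ : Cardinal.{u} | ℵ₀ ≤ κ ∧ ∀ (F : Set X) (𝒱 : Set (Set X)), IsClosed F →
    (∀ V ∈ 𝒱, IsOpen V) → F ⊆ ⋃₀ 𝒱 →
    ∃ 𝒱' ⊆ 𝒱, #𝒱' ≤ κ ∧ F ⊆ ⋃ V ∈ 𝒱', closure V}

/-- The closed pseudocharacter of a space. -/
def closedPseudoCharacter (X : Type u) [TopologicalSpace X] : Cardinal.{u} :=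
  sInf {κ : Cardinal.{u} | ℵ₀ ≤ κ ∧ ∀ x : X, ∃ 𝒰 : Set (Set X), #𝒰 ≤ κ ∧
    (∀ U ∈ 𝒰, IsOpen U ∧ x ∈ U) ∧ ⋂ U ∈ 𝒰, closure U = {x}}

def IsCompleteAccPt {X : Type*} [TopologicalSpace X] (p : X) (A : Set X) : Prop :=
  ∀ U : Set X, IsOpen U → p ∈ U → #(U ∩ A : Set X) = #A

def IsFreeSequence {X ι : Type*} [TopologicalSpace X] [Preorder ι]
    (S : X → Set X) (x : ι → X) : Prop :=
  ∀ α : ι, closure (⋃ β ∈ {β | β < α}, S (x β)) ∩ closure (x '' {β | α ≤ β}) = ∅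

section

variable {X : Type u} [TopologicalSpace X]

theorem exists_subset_mk_le_tightness_of_mem_closure {A : Set X} {y : X}
    (hy : y ∈ closure A) : ∃ B ⊆ A, #B ≤ tightness X ∧ y ∈ closure B := by
  have hne : {τ : Cardinal.{u} | ℵ₀ ≤ τ ∧ ∀ (A : Set X) (y : X), y ∈ closure A →
      ∃ B ⊆ A, #B ≤ τ ∧ y ∈ closure B}.Nonempty :=
    ⟨max ℵ₀ #X, le_max_left _ _, fun A _ hy =>
      ⟨A, subset_rfl, (mk_set_le A).trans (le_max_right _ _), hy⟩⟩
  exact (csInf_mem hne).2 A y hy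

theorem exists_subset_mk_le_tightness_of_mem_closure_inter {C D : Set X} {p : X}
    (hpC : p ∈ C) (hpD : p ∈ closure (D ∩ C)) :
    ∃ B ⊆ D ∩ C, #B ≤ tightness C ∧ p ∈ closure B := by
  have hp : (⟨p, hpC⟩ : C) ∈ closure ((↑) ⁻¹' D : Set C) := by
    rwa [closure_subtype, Subtype.image_preimage_coe, inter_comm]
  obtain ⟨B, hBD, hBcard, hpB⟩ := exists_subset_mk_le_tightness_of_mem_closure hp
  refine ⟨(↑) '' B, ?_, mk_image_le.trans hBcard, closure_subtype.mp hpB⟩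
  rintro _ ⟨c, hc, rfl⟩
  exact ⟨hBD hc, c.2⟩

theorem iUnion_subset_closure_iUnion_inter {ι : Type*} {T : ι → Set X} {C : Set X}
    (h : ∀ i, T i ⊆ closure (T i ∩ C)) : ⋃ i, T i ⊆ closure ((⋃ i, T i) ∩ C) :=
  iUnion_subset fun i =>
    (h i).trans (closure_mono (inter_subset_inter_left C (subset_iUnion T i)))

theorem IsCompleteAccPt.mem_closure_diff {p : X} {A T : Set X} (hp : IsCompleteAccPt p A)
    (hT : #T < #A) : p ∈ closure (A \ T) := by
  refine mem_closure_iff.mpr fun U hU hpU => ?_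
  by_contra hempty
  have hUA : U ∩ A ⊆ T := fun a ⟨haU, haA⟩ => by
    by_contra haT
    exact hempty ⟨a, haU, haA, haT⟩
  exact (hp U hU hpU ▸ (mk_le_mk_of_subset hUA)).not_gt hT

theorem IsFreeSequence.notMem_closure_tail {ι : Type*} [Preorder ι] {S : X → Set X}
    {x : ι → X} (hx : IsFreeSequence S x) {α : ι} {p : X}
    (hp : p ∈ closure (⋃ β ∈ {β | β < α}, S (x β))) : p ∉ closure (x '' {β | α ≤ β}) :=
  fun hp' => (hx α).subset ⟨hp, hp'⟩

theorem IsFreeSequence.injective {ι : Type*} [LinearOrder ι] {S : X → Set X} {x : ι → X}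
    (hx : IsFreeSequence S x) (hS : ∀ y, y ∈ S y) : Function.Injective x :=
  .of_lt_imp_ne fun β γ hβγ heq =>
    hx.notMem_closure_tail (subset_closure (mem_biUnion hβγ (hS (x β))))
      (heq ▸ subset_closure ⟨γ, le_rfl, rfl⟩)

end

theorem exists_forall_lt_of_mk_lt_cof {ι : Type*} [LinearOrder ι] {s : Set ι}
    (hs : #s < Order.cof ι) : ∃ a, ∀ b ∈ s, b < a := by
  by_contra! h
  exact (Order.cof_le h).not_gt hs

theorem exists_subset_biUnion_Iio_of_mk_lt_cof {X ι : Type u} [LinearOrder ι]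
    {T : ι → Set X} {B : Set X} (hB : B ⊆ ⋃ i, T i) (hcard : #B < Order.cof ι) :
    ∃ a, B ⊆ ⋃ i ∈ {i | i < a}, T i := by
  choose f hf using fun b : B => mem_iUnion.mp (hB b.2)
  obtain ⟨a, ha⟩ := exists_forall_lt_of_mk_lt_cof (mk_range_le.trans_lt hcard)
  exact ⟨a, fun b hb => mem_biUnion (ha _ (mem_range_self ⟨b, hb⟩)) (hf ⟨b, hb⟩)⟩

theorem no_S_free_sequence_of_succ_compact_general (X : Type u) [TopologicalSpace X]
    (κ : Cardinal.{u}) (hκ : ℵ₀ ≤ κ)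
    (𝒞 : Set (Set X)) (hwit : IsWeakTightnessWitness X κ 𝒞)
    (S : X → Set X)
    (hS : ∀ x : X, x ∈ S x ∧ #(S x) ≤ 2 ^ κ ∧ ∀ C ∈ 𝒞, ∀ a ∈ S x, a ∈ closure (S x ∩ C))
    (hcpt : ∀ A : Set X, #A = Order.succ κ →
      ∃ p : X, ∀ U : Set X, IsOpen U → p ∈ U → #(U ∩ A : Set X) = #A) :
    ¬ ∃ x : (Order.succ κ).ord.ToType → X,
      ∀ α : (Order.succ κ).ord.ToType,
        closure (⋃ β ∈ {β | β < α}, S (x β)) ∩ closure (x '' {β | α ≤ β}) = ∅ := by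
  rintro ⟨x, hx : IsFreeSequence S x⟩
  have hcard : #(range x) = Order.succ κ := by
    rw [mk_range_eq x (hx.injective fun y => (hS y).1), mk_toType, card_ord]
  obtain ⟨p, hp : IsCompleteAccPt p (range x)⟩ := hcpt _ hcard
  obtain ⟨C, hC, hpC⟩ : p ∈ ⋃₀ 𝒞 := hwit.1 ▸ mem_univ p
  have hpD : p ∈ closure ((⋃ α, S (x α)) ∩ C) := by
    have hrange : p ∈ closure (range x \ ∅) := hp.mem_closure_diff (by simp [hcard])
    refine closure_minimal ?_ isClosed_closure hrange
    rintro _ ⟨⟨α, rfl⟩, -⟩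
    exact iUnion_subset_closure_iUnion_inter (fun α => (hS (x α)).2.2 C hC)
      (mem_iUnion_of_mem α (hS (x α)).1)
  obtain ⟨B, hBD, hBcard, hpB⟩ := exists_subset_mk_le_tightness_of_mem_closure_inter hpC hpD
  have hBcof : #B < Order.cof (Order.succ κ).ord.ToType := by
    rw [Ordinal.cof_toType, (isRegular_succ hκ).cof_ord]
    exact (hBcard.trans (hwit.2.2 C hC).1).trans_lt (Order.lt_succ κ)
  obtain ⟨α, hBα⟩ := exists_subset_biUnion_Iio_of_mk_lt_cof (hBD.trans inter_subset_left) hBcof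
  refine hx.notMem_closure_tail (closure_mono hBα hpB) ?_
  have hhead : #(x '' Iio α) < #(range x) := by
    rw [hcard]
    exact mk_image_le.trans_lt ((mk_Iio_lt α (by simp)).trans_eq (by simp))
  refine closure_mono ?_ (hp.mem_closure_diff hhead)
  rintro _ ⟨⟨β, rfl⟩, hβ⟩
  exact mem_image_of_mem x (show α ≤ β from not_lt.mp fun h => hβ (mem_image_of_mem x h))

/-- If `wt(X) = κ` is witnessed by the cover `𝒞`, `S` assigns to each point a
`𝒞`-saturated set of cardinality at most `2^κ` containing it, and `X` is `κ⁺`-compact,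
then `X` has no S-free sequence of length `κ⁺`. -/
theorem no_S_free_sequence_of_succ_compact (X : Type u) [TopologicalSpace X]
    (κ : Cardinal.{u}) (hκ : ℵ₀ ≤ κ) (hwt : weakTightness X = κ)
    (𝒞 : Set (Set X)) (hwit : IsWeakTightnessWitness X κ 𝒞)
    (S : X → Set X)
    (hS : ∀ x : X, x ∈ S x ∧ #(S x) ≤ 2 ^ κ ∧ ∀ C ∈ 𝒞, ∀ a ∈ S x, a ∈ closure (S x ∩ C))
    (hcpt : ∀ A : Set X, #A = Order.succ κ →
      ∃ p : X, ∀ U : Set X, IsOpen U → p ∈ U → #(U ∩ A : Set X) = #A) :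
    ¬ ∃ x : (Order.succ κ).ord.ToType → X,
      ∀ α : (Order.succ κ).ord.ToType,
        closure (⋃ β ∈ {β | β < α}, S (x β)) ∩ closure (x '' {β | α ≤ β}) = ∅ :=
  no_S_free_sequence_of_succ_compact_general X κ hκ 𝒞 hwit S hS hcpt
end
end

section
/- If X is a Hausdorff topological space, then |X| ≤ 2^{aL_c(X)·wt(X)·ψ_c(X)}. -/
open Cardinal Set Topology
universe u
noncomputable section

/-!
Put `κ = aL_c(X)·wt(X)·ψ_c(X)` and fix at every point `x` a family `𝒰 x` of at most `κ` open
neighbourhoods whose closures meet in `{x}`. The traces on `B` of these families separate the points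
of `closure B`, so `|closure B| ≤ 2^κ` whenever `|B| ≤ κ`.

A closing-off argument of length `κ⁺` produces a set `A` with `|A| ≤ 2^κ` which contains the
closure of each of its subsets of size `≤ κ`, lies in `closure (A ∩ C)` for each member `C` of a
weak tightness cover `𝒞`, and meets the complement of every union of closures of at most `κ` members of the `𝒰 y`,
`y ∈ A`, unless that union is all of `X`. Since every `C ∈ 𝒞` has tightness `≤ κ`, a point of
`closure A` lying in `C` is in the closure of a `κ`-small subset of `A ∩ C`, so `A` is closed. If
`q ∉ A`, choose for each `y ∈ A` some `V y ∈ 𝒰 y` whose closure misses `q`; the almost Lindelöf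
property covers `A` by the closures of `κ` of the `V y`. Their union misses `q`, so `A` meets its
complement, which is absurd. Hence `A = X`.
-/

section CardinalArithmetic

variable {α ι : Type u} {c : Cardinal.{u}}

lemma mk_union_le_of_le (hc : ℵ₀ ≤ c) {s t : Set α} (hs : #s ≤ c) (ht : #t ≤ c) :
    #(s ∪ t : Set α) ≤ c :=
  (mk_union_le s t).trans <| (add_le_add hs ht).trans_eq (add_eq_self hc)

lemma mk_iUnion_le_of_le (hc : ℵ₀ ≤ c) {f : ι → Set α} (hι : #ι ≤ c) (hf : ∀ i, #(f i) ≤ c) :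
    #(⋃ i, f i) ≤ c :=
  (mk_iUnion_le f).trans <| (mul_le_mul' hι (ciSup_le' hf)).trans_eq (mul_eq_self hc)

lemma two_power_power_self (hc : ℵ₀ ≤ c) : ((2 : Cardinal.{u}) ^ c) ^ c = 2 ^ c := by
  rw [← power_mul, mul_eq_self hc]

lemma sInf_setOf_aleph0_le_and_spec {P : Cardinal.{u} → Prop} (hc : ℵ₀ ≤ c) (hP : P c) :
    ℵ₀ ≤ sInf {c | ℵ₀ ≤ c ∧ P c} ∧ P (sInf {c | ℵ₀ ≤ c ∧ P c}) :=
  csInf_mem (s := {c | ℵ₀ ≤ c ∧ P c}) ⟨c, hc, hP⟩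

end CardinalArithmetic

section ClosingOff

variable {X : Type u}

def closingOffChain (G : Set X → Set X) : Ordinal.{u} → Set X :=
  WellFoundedLT.fix fun o earlier => G (⋃ (j) (hj : j < o), earlier j hj)

lemma closingOffChain_eq (G : Set X → Set X) (o : Ordinal.{u}) :
    closingOffChain G o = G (⋃ j < o, closingOffChain G j) :=
  WellFoundedLT.fix_eq _ o

theorem exists_mk_le_two_power_forall_small_subset_image_subset {κ : Cardinal.{u}}
    (hκ : ℵ₀ ≤ κ) (F : Set X → Set X) (hF : ∀ B : Set X, #B ≤ κ → #(F B) ≤ 2 ^ κ) :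
    ∃ A : Set X, #A ≤ 2 ^ κ ∧ ∀ B ⊆ A, #B ≤ κ → F B ⊆ A := by
  have h2κ : ℵ₀ ≤ 2 ^ κ := hκ.trans (cantor κ).le
  let G : Set X → Set X := fun S => ⋃ B : {B : Set X // B ⊆ S ∧ #B ≤ κ}, F B
  have hG : ∀ S : Set X, #S ≤ 2 ^ κ → #(G S) ≤ 2 ^ κ := fun S hS =>
    mk_iUnion_le_of_le h2κ ((mk_bounded_subset_le S κ).trans <|
      (power_le_power_right (max_le hS h2κ)).trans_eq (two_power_power_self hκ))
      fun B => hF B B.2.2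
  set Λ := (Order.succ κ).ord
  have hΛ : Λ.card ≤ 2 ^ κ := by
    rw [card_ord]
    exact Order.succ_le_of_lt (cantor κ)
  have hstage : ∀ o < Λ, #(closingOffChain G o) ≤ 2 ^ κ := by
    intro o
    induction o using WellFoundedLT.induction with
    | _ o ih =>
      intro ho
      rw [closingOffChain_eq]
      exact hG _ (mk_biUnion_le_of_le ((Ordinal.card_le_card ho.le).trans hΛ) h2κ _
        fun j hj => ih j hj (hj.trans ho))
  refine ⟨⋃ o < Λ, closingOffChain G o, mk_biUnion_le_of_le hΛ h2κ _ hstage,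
    fun B hB hBκ => ?_⟩
  choose stage hstage_lt hmem using fun b : B => mem_iUnion₂.1 (hB b.2)
  -- `κ⁺` is regular, so the `κ` stages at which the points of `B` appear are bounded below it.
  have hsup : Order.succ (iSup stage) < Λ :=
    (isSuccLimit_ord (hκ.trans (Order.le_succ κ))).succ_lt
      (Ordinal.iSup_lt_of_lt_cof (by
        rw [(isRegular_succ hκ).cof_ord]
        exact hBκ.trans_lt (Order.lt_succ κ)) hstage_lt)
  refine Subset.trans ?_ (subset_biUnion_of_mem (u := closingOffChain G) hsup)
  rw [closingOffChain_eq]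
  refine subset_iUnion_of_subset ⟨B, fun b hb => ?_, hBκ⟩ subset_rfl
  exact mem_biUnion (Order.lt_succ_of_le (Ordinal.le_iSup stage ⟨b, hb⟩)) (hmem ⟨b, hb⟩)

end ClosingOff

section CardinalFunctions

variable (X : Type u) [TopologicalSpace X]

lemma tightness_spec :
    ℵ₀ ≤ tightness X ∧ ∀ (A : Set X) (y : X), y ∈ closure A →
      ∃ B ⊆ A, #B ≤ tightness X ∧ y ∈ closure B :=
  sInf_setOf_aleph0_le_and_spec (le_max_left ℵ₀ #X)
    fun A _ hy => ⟨A, subset_rfl, (mk_set_le A).trans (le_max_right _ _), hy⟩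

lemma almostLindelofDegreeClosed_spec :
    ℵ₀ ≤ almostLindelofDegreeClosed X ∧
    ∀ (F : Set X) (𝒱 : Set (Set X)), IsClosed F → (∀ V ∈ 𝒱, IsOpen V) → F ⊆ ⋃₀ 𝒱 →
      ∃ 𝒱' ⊆ 𝒱, #𝒱' ≤ almostLindelofDegreeClosed X ∧ F ⊆ ⋃ V ∈ 𝒱', closure V :=
  sInf_setOf_aleph0_le_and_spec (le_max_left ℵ₀ #(Set X)) fun _ 𝒱 _ _ hcov =>
    ⟨𝒱, subset_rfl, (mk_set_le 𝒱).trans (le_max_right _ _),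
      hcov.trans (sUnion_eq_biUnion.trans_subset (iUnion₂_mono fun _ _ => subset_closure))⟩

lemma closedPseudoCharacter_spec [T2Space X] :
    ℵ₀ ≤ closedPseudoCharacter X ∧
    ∀ x : X, ∃ 𝒰 : Set (Set X), #𝒰 ≤ closedPseudoCharacter X ∧
      (∀ U ∈ 𝒰, IsOpen U ∧ x ∈ U) ∧ ⋂ U ∈ 𝒰, closure U = {x} := by
  refine sInf_setOf_aleph0_le_and_spec (le_max_left ℵ₀ #(Set X)) fun x =>
    ⟨{U | IsOpen U ∧ x ∈ U}, (mk_set_le _).trans (le_max_right _ _), fun _ hU => hU, ?_⟩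
  refine subset_antisymm (fun y hy => ?_) (singleton_subset_iff.2 <| mem_iInter₂.2
    fun U hU => subset_closure hU.2)
  by_contra hyx
  obtain ⟨U, V, hU, hV, hxU, hyV, hUV⟩ := t2_separation (Ne.symm hyx)
  exact (hUV.closure_left hV).ne_of_mem (mem_iInter₂.1 hy U ⟨hU, hxU⟩) hyV rfl

lemma weakTightness_spec :
    ℵ₀ ≤ weakTightness X ∧ ∃ 𝒞 : Set (Set X), IsWeakTightnessWitness X (weakTightness X) 𝒞 := by
  have hX : #(Set.univ : Set X) ≤ max ℵ₀ #X := mk_univ.trans_le (le_max_right _ _)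
  refine sInf_setOf_aleph0_le_and_spec (le_max_left ℵ₀ #X) ⟨{Set.univ}, sUnion_singleton _, ?_, ?_⟩
  · rw [mk_singleton]
    exact one_le_aleph0.trans ((le_max_left _ _).trans (cantor _).le)
  · rintro C rfl
    refine ⟨csInf_le' ⟨le_max_left _ _, fun A _ hy => ⟨A, subset_rfl, (mk_set_le A).trans hX, hy⟩⟩,
      eq_univ_of_forall fun x => mem_iUnion₂.2 ⟨Set.univ, ⟨subset_rfl, hX.trans (cantor _).le⟩, ?_⟩⟩
    rw [closure_univ]
    exact mem_univ x

end CardinalFunctions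

section Topology

variable {X : Type u} [TopologicalSpace X] {κ : Cardinal.{u}}

lemma kClosure_mono {μ μ' : Cardinal.{u}} (h : μ ≤ μ') (A : Set X) :
    kClosure μ A ⊆ kClosure μ' A :=
  biUnion_mono (fun _ hB => ⟨hB.1, hB.2.trans h⟩) fun _ _ => subset_rfl

lemma IsWeakTightnessWitness.mono {κ' : Cardinal.{u}} {𝒞 : Set (Set X)}
    (h𝒞 : IsWeakTightnessWitness X κ 𝒞) (hκ : κ ≤ κ') : IsWeakTightnessWitness X κ' 𝒞 := by
  have h2 : (2 : Cardinal.{u}) ^ κ ≤ 2 ^ κ' := power_le_power_left two_ne_zero hκ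
  refine ⟨h𝒞.1, h𝒞.2.1.trans h2, fun C hC => ⟨(h𝒞.2.2 C hC).1.trans hκ, ?_⟩⟩
  exact eq_univ_of_univ_subset ((h𝒞.2.2 C hC).2 ▸ kClosure_mono h2 C)

lemma exists_subset_mk_le_mem_closure_of_tightness_le {C : Set X} (hC : tightness C ≤ κ)
    {A : Set X} (hAC : A ⊆ C) {y : X} (hyC : y ∈ C) (hyA : y ∈ closure A) :
    ∃ B ⊆ A, #B ≤ κ ∧ y ∈ closure B := by
  have hy : (⟨y, hyC⟩ : C) ∈ closure (Subtype.val ⁻¹' A) := by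
    rwa [closure_subtype, Subtype.image_preimage_coe, inter_eq_self_of_subset_right hAC]
  obtain ⟨B, hBA, hBκ, hyB⟩ := (tightness_spec C).2 _ _ hy
  exact ⟨Subtype.val '' B, image_subset_iff.2 hBA, mk_image_le.trans (hBκ.trans hC),
    closure_subtype.1 hyB⟩

theorem isClosed_of_closure_subset_of_subset_closure_inter {𝒞 : Set (Set X)}
    (h𝒞 : ⋃₀ 𝒞 = Set.univ) (ht : ∀ C ∈ 𝒞, tightness C ≤ κ) {A : Set X}
    (hA : ∀ B ⊆ A, #B ≤ κ → closure B ⊆ A) (hA𝒞 : ∀ C ∈ 𝒞, A ⊆ closure (A ∩ C)) :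
    IsClosed A := by
  refine closure_subset_iff_isClosed.1 fun y hy => ?_
  obtain ⟨C, hC, hyC⟩ := mem_sUnion.1 (h𝒞 ▸ mem_univ y)
  obtain ⟨B, hBA, hBκ, hyB⟩ := exists_subset_mk_le_mem_closure_of_tightness_le (ht C hC)
    inter_subset_right hyC (closure_minimal (hA𝒞 C hC) isClosed_closure hy)
  exact hA B (hBA.trans inter_subset_left) hBκ hyB

theorem mk_closure_le_two_power (hκ : ℵ₀ ≤ κ) {𝒰 : X → Set (Set X)} (h𝒰κ : ∀ x, #(𝒰 x) ≤ κ)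
    (h𝒰 : ∀ x, ∀ U ∈ 𝒰 x, IsOpen U ∧ x ∈ U) (h𝒰x : ∀ x, ⋂ U ∈ 𝒰 x, closure U = {x})
    {B : Set X} (hB : #B ≤ κ) : #(closure B) ≤ 2 ^ κ := by
  let trace : closure B → {t : Set (Set B) // #t ≤ κ} := fun x =>
    ⟨(Subtype.val ⁻¹' ·) '' 𝒰 x, mk_image_le.trans (h𝒰κ x)⟩
  have htrace : trace.Injective := by
    intro x y hxy
    by_contra hne
    obtain ⟨U, hU, hyU⟩ : ∃ U ∈ 𝒰 x, (y : X) ∉ closure U := by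
      by_contra! h
      have hyx : (y : X) ∈ ⋂ U ∈ 𝒰 x, closure U := mem_iInter₂.2 h
      rw [h𝒰x, mem_singleton_iff] at hyx
      exact hne (Subtype.ext hyx).symm
    have hUy : Subtype.val ⁻¹' U ∈ (trace y).1 := by
      rw [← hxy]
      exact mem_image_of_mem _ hU
    obtain ⟨V, hV, hVU⟩ := hUy
    rw [Subtype.preimage_coe_eq_preimage_coe_iff] at hVU
    have hyV : (y : X) ∈ closure (V ∩ B) := (h𝒰 _ _ hV).1.inter_closure ⟨(h𝒰 _ _ hV).2, y.2⟩
    rw [inter_comm, hVU] at hyV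
    exact hyU (closure_mono inter_subset_right hyV)
  calc #(closure B) ≤ #{t : Set (Set B) // #t ≤ κ} := mk_le_of_injective htrace
    _ ≤ max #(Set B) ℵ₀ ^ κ := mk_bounded_set_le _ _
    _ ≤ (2 ^ κ) ^ κ := by
      rw [mk_set]
      exact power_le_power_right (max_le (power_le_power_left two_ne_zero hB)
        (hκ.trans (cantor κ).le))
    _ = 2 ^ κ := two_power_power_self hκ

theorem eq_univ_of_forall_small_subfamily {𝒰 : X → Set (Set X)}
    (haL : almostLindelofDegreeClosed X ≤ κ) (h𝒰 : ∀ x, ∀ U ∈ 𝒰 x, IsOpen U ∧ x ∈ U)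
    (h𝒰x : ∀ x, ⋂ U ∈ 𝒰 x, closure U = {x}) {A : Set X} (hA : IsClosed A)
    (hescape : ∀ B ⊆ A, #B ≤ κ → ∀ 𝒱 ⊆ ⋃ y ∈ B, 𝒰 y,
      (⋃ V ∈ 𝒱, closure V)ᶜ.Nonempty → ¬A ⊆ ⋃ V ∈ 𝒱, closure V) :
    A = Set.univ := by
  refine eq_univ_of_forall fun q => by_contra fun hq => ?_
  have hV : ∀ y : A, ∃ V ∈ 𝒰 y, q ∉ closure V := by
    intro y
    by_contra! h
    have hqy : q ∈ ⋂ U ∈ 𝒰 y, closure U := mem_iInter₂.2 h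
    rw [h𝒰x, mem_singleton_iff] at hqy
    exact hq (hqy ▸ y.2)
  choose V hV hqV using hV
  obtain ⟨𝒱, h𝒱V, h𝒱κ, hA𝒱⟩ := (almostLindelofDegreeClosed_spec X).2 A (range V) hA
    (forall_mem_range.2 fun y => (h𝒰 _ _ (hV y)).1)
    fun y hy => mem_sUnion.2 ⟨V ⟨y, hy⟩, mem_range_self _, (h𝒰 _ _ (hV _)).2⟩
  choose y hy using fun W : 𝒱 => h𝒱V W.2
  refine hescape (range (Subtype.val ∘ y)) (range_subset_iff.2 fun W => (y W).2)
    (mk_range_le.trans (h𝒱κ.trans haL)) 𝒱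
    (fun W hW => mem_biUnion (mem_range_self ⟨W, hW⟩)
      (by simpa only [hy, Function.comp_apply] using hV (y ⟨W, hW⟩)))
    ⟨q, fun hqW => ?_⟩ hA𝒱
  obtain ⟨W, hW, hqW⟩ := mem_iUnion₂.1 hqW
  exact hqV (y ⟨W, hW⟩) (by rwa [hy])

theorem exists_set_mk_le_two_power_of_isWeakTightnessWitness [Nonempty X] (hκ : ℵ₀ ≤ κ)
    {𝒰 : X → Set (Set X)} (h𝒰κ : ∀ x, #(𝒰 x) ≤ κ) (h𝒰 : ∀ x, ∀ U ∈ 𝒰 x, IsOpen U ∧ x ∈ U)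
    (h𝒰x : ∀ x, ⋂ U ∈ 𝒰 x, closure U = {x}) {𝒞 : Set (Set X)}
    (h𝒞 : IsWeakTightnessWitness X κ 𝒞) :
    ∃ A : Set X, #A ≤ 2 ^ κ ∧ (∀ B ⊆ A, #B ≤ κ → closure B ⊆ A) ∧
      (∀ C ∈ 𝒞, A ⊆ closure (A ∩ C)) ∧
      ∀ B ⊆ A, #B ≤ κ → ∀ 𝒱 ⊆ ⋃ y ∈ B, 𝒰 y,
        (⋃ V ∈ 𝒱, closure V)ᶜ.Nonempty → ¬A ⊆ ⋃ V ∈ 𝒱, closure V := by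
  have h2κ : ℵ₀ ≤ 2 ^ κ := hκ.trans (cantor κ).le
  have hdense : ∀ (C : 𝒞) (a : X), ∃ B ⊆ C.1, #B ≤ 2 ^ κ ∧ a ∈ closure B := fun C a => by
    have ha : a ∈ kClosure (2 ^ κ) C.1 := (h𝒞.2.2 C C.2).2 ▸ mem_univ a
    obtain ⟨B, ⟨hBC, hBκ⟩, haB⟩ := mem_iUnion₂.1 ha
    exact ⟨B, hBC, hBκ, haB⟩
  choose D hDC hDκ hD using hdense
  let escape : Set (Set X) → X := fun 𝒱 => Classical.epsilon (· ∉ ⋃ V ∈ 𝒱, closure V)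
  let F : Set X → Set X := fun B =>
    closure B ∪ (⋃ (a : B) (C : 𝒞), D C a) ∪ escape '' 𝒫 (⋃ y ∈ B, 𝒰 y)
  have hF : ∀ B : Set X, #B ≤ κ → #(F B) ≤ 2 ^ κ := by
    intro B hB
    refine mk_union_le_of_le h2κ (mk_union_le_of_le h2κ
      (mk_closure_le_two_power hκ h𝒰κ h𝒰 h𝒰x hB) ?_) ?_
    · exact mk_iUnion_le_of_le h2κ (hB.trans (cantor κ).le) fun a =>
        mk_iUnion_le_of_le h2κ h𝒞.2.1 fun C => hDκ C a
    · refine mk_image_le.trans ?_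
      rw [mk_powerset, biUnion_eq_iUnion]
      exact power_le_power_left two_ne_zero (mk_iUnion_le_of_le hκ hB fun y => h𝒰κ y)
  obtain ⟨A, hAκ, hA⟩ := exists_mk_le_two_power_forall_small_subset_image_subset hκ F hF
  refine ⟨A, hAκ, fun B hB hBκ => subset_union_left.trans (subset_union_left.trans
    (hA B hB hBκ)), fun C hC a ha => ?_, fun B hB hBκ 𝒱 h𝒱 ⟨q, hq⟩ hA𝒱 => ?_⟩
  · refine closure_mono (subset_inter (fun z hz => ?_) (hDC ⟨C, hC⟩ a)) (hD _ _)
    refine hA {a} (singleton_subset_iff.2 ha) (mk_singleton a ▸ one_le_aleph0.trans hκ) ?_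
    exact Or.inl (Or.inr (mem_iUnion₂.2 ⟨⟨a, rfl⟩, ⟨C, hC⟩, hz⟩))
  · exact Classical.epsilon_spec (p := (· ∉ ⋃ V ∈ 𝒱, closure V)) ⟨q, hq⟩
      (hA𝒱 (hA B hB hBκ (Or.inr ⟨𝒱, h𝒱, rfl⟩)))

end Topology

theorem mk_le_two_power_of_le {X : Type u} [TopologicalSpace X] [T2Space X] {κ : Cardinal.{u}}
    (haL : almostLindelofDegreeClosed X ≤ κ) (hwt : weakTightness X ≤ κ)
    (hψ : closedPseudoCharacter X ≤ κ) : #X ≤ 2 ^ κ := by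
  rcases isEmpty_or_nonempty X with hX | hX
  · simp
  have hκ : ℵ₀ ≤ κ := (almostLindelofDegreeClosed_spec X).1.trans haL
  choose 𝒰 h𝒰κ h𝒰 h𝒰x using (closedPseudoCharacter_spec X).2
  obtain ⟨𝒞, h𝒞⟩ := (weakTightness_spec X).2
  replace h𝒞 := h𝒞.mono hwt
  obtain ⟨A, hAκ, hAcl, hA𝒞, hAescape⟩ := exists_set_mk_le_two_power_of_isWeakTightnessWitness hκ
    (fun x => (h𝒰κ x).trans hψ) h𝒰 h𝒰x h𝒞
  have hAclosed : IsClosed A :=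
    isClosed_of_closure_subset_of_subset_closure_inter h𝒞.1 (fun C hC => (h𝒞.2.2 C hC).1) hAcl hA𝒞
  rw [← mk_univ, ← eq_univ_of_forall_small_subfamily haL h𝒰 h𝒰x hAclosed hAescape]
  exact hAκ

/-- For a Hausdorff space `X`, `|X| ≤ 2^{aL_c(X)·wt(X)·ψ_c(X)}`. -/
theorem card_le_two_pow_almostLindelof_weakTightness_closedPsi
    (X : Type u) [TopologicalSpace X] [T2Space X] :
    #X ≤ 2 ^ (almostLindelofDegreeClosed X * weakTightness X * closedPseudoCharacter X) := by
  have ha := (aleph0_pos.trans_le (almostLindelofDegreeClosed_spec X).1).ne'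
  have hw := (aleph0_pos.trans_le (weakTightness_spec X).1).ne'
  have hψ := (aleph0_pos.trans_le (closedPseudoCharacter_spec X).1).ne'
  exact mk_le_two_power_of_le ((le_mul_right hw).trans (le_mul_right hψ))
    ((le_mul_left ha).trans (le_mul_right hψ)) (le_mul_left (mul_ne_zero ha hw))

end
end
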